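/- arXiv:math/0407282 — 2 statements merged into one kernel-verified Lean document; each statement's English description precedes it below -/
import Mathlib

section
/- Let β be the Tribonacci number and α a complex root of X³−X²−X−1. Define R(1), R(2), R(3) as the subsets of the Tribonacci Rauzy fractal corresponding to admissible sequences (w_i)_{i≥0} with w₀ = 0, w₀w₁ = 10, and w₀w₁ = 11 respectively. Then R(1) = α(R(1) ∪ R(2) ∪ R(3)), R(2) = αR(1) + 1, and R(3) = αR(2) + 1. -/
/-- A `{0,1}`-sequence is admissible for the Tribonacci shift if it has no three
consecutive `1`'s. -/
def TribAdmissible (w : ℕ → ℕ) : Prop :=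
  (∀ i, w i ≤ 1) ∧ ∀ i, ¬(w i = 1 ∧ w (i + 1) = 1 ∧ w (i + 2) = 1)

/-- The piece of the Tribonacci Rauzy fractal consisting of values of admissible sequences
satisfying the predicate `P`. -/
def rauzyPiece (α : ℂ) (P : (ℕ → ℕ) → Prop) : Set ℂ :=
  {z | ∃ w : ℕ → ℕ, TribAdmissible w ∧ P w ∧ HasSum (fun i => (w i : ℂ) * α ^ i) z}

/-! Prepending a digit `a` to an admissible sequence of value `s` gives a sequence of value
`a + α s`, and the result is admissible unless `a = 1` and the sequence starts with `11`.
Conversely every admissible sequence arises this way from its shift. Sorting admissible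
sequences by their first two digits turns this into the three set equations. -/

section PowerSeries

variable {K : Type*} [Field K] [TopologicalSpace K] [IsTopologicalRing K] [T2Space K]

theorem hasSum_mul_pow_iff_exists_tail {f : ℕ → K} {α z : K} :
    HasSum (fun i => f i * α ^ i) z ↔
      ∃ s, HasSum (fun i => f (i + 1) * α ^ i) s ∧ z = f 0 + α * s := by
  have shift : ∀ i, f (i + 1) * α ^ (i + 1) = α * (f (i + 1) * α ^ i) := fun i => by ring
  constructor
  · intro h
    rcases eq_or_ne α 0 with rfl | hα
    · have hsingle : ∀ g : ℕ → K, HasSum (fun i => g i * (0 : K) ^ i) (g 0) := fun g => by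
        simpa using hasSum_single (f := fun i => g i * (0 : K) ^ i) 0 fun i hi => by
          simp [zero_pow hi]
      exact ⟨f 1, hsingle _, by simpa using h.unique (hsingle f)⟩
    · refine ⟨(z - f 0) / α, ?_, by field_simp; ring⟩
      rw [← hasSum_mul_left_iff hα, mul_div_cancel₀ _ hα]
      have := (hasSum_nat_add_iff' (f := fun i => f i * α ^ i) 1).mpr h
      simpa only [shift, Finset.sum_range_one, pow_zero, mul_one] using this
  · rintro ⟨s, hs, rfl⟩
    have := HasSum.zero_add (f := fun i => f i * α ^ i)
      (by simpa only [shift] using hs.mul_left α)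
    simpa only [pow_zero, mul_one] using this

end PowerSeries

theorem TribAdmissible.tail {w : ℕ → ℕ} (hw : TribAdmissible w) :
    TribAdmissible (Stream'.tail w) :=
  ⟨fun i => hw.1 (i + 1), fun i => hw.2 (i + 1)⟩

theorem TribAdmissible.cons {a : ℕ} (ha : a ≤ 1) {v : ℕ → ℕ} (hv : TribAdmissible v)
    (h : ¬(a = 1 ∧ v 0 = 1 ∧ v 1 = 1)) : TribAdmissible (Stream'.cons a v) := by
  refine ⟨fun i => ?_, fun i => ?_⟩ <;> cases i
  exacts [ha, hv.1 _, h, hv.2 _]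

theorem TribAdmissible.prefix_cases {w : ℕ → ℕ} (hw : TribAdmissible w) :
    (w 0 = 0 ∨ w 0 = 1 ∧ w 1 = 0) ∨ w 0 = 1 ∧ w 1 = 1 := by
  have := hw.1 0; have := hw.1 1; omega

section RauzyPiece

variable (α : ℂ)

theorem rauzyPiece_congr {P Q : (ℕ → ℕ) → Prop} (h : ∀ w, TribAdmissible w → (P w ↔ Q w)) :
    rauzyPiece α P = rauzyPiece α Q := by
  ext z
  exact exists_congr fun w => and_congr_right fun hw => and_congr_left' (h w hw)

theorem rauzyPiece_or (P Q : (ℕ → ℕ) → Prop) :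
    rauzyPiece α (fun w => P w ∨ Q w) = rauzyPiece α P ∪ rauzyPiece α Q := by
  ext z
  simp only [rauzyPiece, Set.mem_ofPred_eq, Set.mem_union, or_and_right, and_or_left, exists_or]

theorem rauzyPiece_cons {a : ℕ} (ha : a ≤ 1) {P Q : (ℕ → ℕ) → Prop}
    (hQ : ∀ v, TribAdmissible v → (Q v ↔ P v ∧ ¬(a = 1 ∧ v 0 = 1 ∧ v 1 = 1))) :
    rauzyPiece α (fun w => w 0 = a ∧ P (Stream'.tail w)) =
      (fun z => α * z + a) '' rauzyPiece α Q := by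
  ext z
  constructor
  · rintro ⟨w, hw, ⟨rfl, hP⟩, hz⟩
    obtain ⟨s, hs, rfl⟩ := hasSum_mul_pow_iff_exists_tail.mp hz
    exact ⟨s, ⟨_, hw.tail, (hQ _ hw.tail).mpr ⟨hP, hw.2 0⟩, hs⟩, add_comm _ _⟩
  · rintro ⟨s, ⟨v, hv, hQv, hs⟩, rfl⟩
    obtain ⟨hP, hcons⟩ := (hQ v hv).mp hQv
    refine ⟨Stream'.cons a v, hv.cons ha hcons, ⟨rfl, hP⟩, ?_⟩
    exact hasSum_mul_pow_iff_exists_tail.mpr ⟨s, hs, add_comm _ _⟩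

end RauzyPiece

theorem rauzy_fractal_ifs_general (α : ℂ) :
    rauzyPiece α (fun w => w 0 = 0) =
        (fun z => α * z) '' (rauzyPiece α (fun w => w 0 = 0) ∪
          rauzyPiece α (fun w => w 0 = 1 ∧ w 1 = 0) ∪
          rauzyPiece α (fun w => w 0 = 1 ∧ w 1 = 1)) ∧
      rauzyPiece α (fun w => w 0 = 1 ∧ w 1 = 0) =
        (fun z => α * z + 1) '' rauzyPiece α (fun w => w 0 = 0) ∧
      rauzyPiece α (fun w => w 0 = 1 ∧ w 1 = 1) =
        (fun z => α * z + 1) '' rauzyPiece α (fun w => w 0 = 1 ∧ w 1 = 0) := by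
  have prefix0 := rauzyPiece_cons α zero_le_one (P := fun _ => True)
    (Q := fun _ => True) (by simp)
  have prefix10 := rauzyPiece_cons α le_rfl (P := fun v => v 0 = 0)
    (Q := fun v => v 0 = 0) (by simp +contextual)
  have prefix11 := rauzyPiece_cons α le_rfl (P := fun v => v 0 = 1)
    (Q := fun v => v 0 = 1 ∧ v 1 = 0) fun v hv => by have := hv.1 1; omega
  have prefix_cases : rauzyPiece α (fun _ => True) =
      rauzyPiece α (fun w => w 0 = 0) ∪ rauzyPiece α (fun w => w 0 = 1 ∧ w 1 = 0) ∪
        rauzyPiece α (fun w => w 0 = 1 ∧ w 1 = 1) := by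
    rw [← rauzyPiece_or, ← rauzyPiece_or]
    exact rauzyPiece_congr α fun w hw => by simpa using hw.prefix_cases
  simp only [Nat.cast_zero, Nat.cast_one, add_zero, and_true] at prefix0 prefix10 prefix11
  rw [← prefix_cases]
  exact ⟨prefix0, prefix10, prefix11⟩

/-- The self-similar (IFS) decomposition of the Tribonacci Rauzy fractal:
`R(1) = α(R(1) ∪ R(2) ∪ R(3))`, `R(2) = αR(1) + 1`, `R(3) = αR(2) + 1`. -/
theorem rauzy_fractal_ifs (α : ℂ) (hroot : α ^ 3 = α ^ 2 + α + 1)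
    (hα : ‖α‖ < 1) :
    rauzyPiece α (fun w => w 0 = 0) =
        (fun z => α * z) '' (rauzyPiece α (fun w => w 0 = 0) ∪
          rauzyPiece α (fun w => w 0 = 1 ∧ w 1 = 0) ∪
          rauzyPiece α (fun w => w 0 = 1 ∧ w 1 = 1)) ∧
      rauzyPiece α (fun w => w 0 = 1 ∧ w 1 = 0) =
        (fun z => α * z + 1) '' rauzyPiece α (fun w => w 0 = 0) ∧
      rauzyPiece α (fun w => w 0 = 1 ∧ w 1 = 1) =
        (fun z => α * z + 1) '' rauzyPiece α (fun w => w 0 = 1 ∧ w 1 = 0) :=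
  rauzy_fractal_ifs_general α
end

section
/- Let β > 1 and define the linear recurrent sequence U₀ = 1, U_k = t₁U_{k-1} + t₂U_{k-2} + … + t_kU₀ + 1 where (t_i) = d*_β(1). If β is a Pisot number, then there is a constant B > 0 with U_N ≥ B β^N for all N. -/
/-!
Multiplying `1 = ∑ tᵢ β^{-i-1}` by `β^{k+1}` and bounding the digits beyond `k` by `β` gives
`∑_{i ≤ k} tᵢ β^{k-i} ≥ β^{k+1} - (1 - β⁻¹)⁻¹`: the tail is at most a geometric series. Feeding
this into the recurrence, strong induction shows `U_N ≥ (1 - β⁻¹) β^N`, the constant being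
chosen so that the `+ 1` of the recurrence exactly absorbs the loss from the tail.
-/

open Finset

section BetaExpansion

variable {β : ℝ} {a : ℕ → ℝ}

theorem hasSum_mul_zpow_sub_of_hasSum_one (hβ : β ≠ 0)
    (hsum : HasSum (fun i => a i * β ^ (-(i : ℤ) - 1)) 1) (k : ℕ) :
    HasSum (fun i => a i * β ^ ((k : ℤ) - i)) (β ^ (k + 1)) := by
  have h := hsum.mul_right (β ^ (k + 1))
  rw [one_mul] at h
  have hterm : ∀ i : ℕ, a i * β ^ (-(i : ℤ) - 1) * β ^ (k + 1) = a i * β ^ ((k : ℤ) - i) := by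
    intro i
    rw [mul_assoc, ← zpow_natCast, ← zpow_add₀ hβ]
    push_cast
    ring_nf
  simpa only [hterm] using h

theorem mul_zpow_tail_le_inv_pow (hβ : 0 < β) (ha : ∀ i, a i ≤ β) (k i : ℕ) :
    a (i + (k + 1)) * β ^ ((k : ℤ) - ↑(i + (k + 1))) ≤ β⁻¹ ^ i := by
  have hexp : (k : ℤ) - ↑(i + (k + 1)) = -↑(i + 1) := by push_cast; ring
  calc a (i + (k + 1)) * β ^ ((k : ℤ) - ↑(i + (k + 1)))
      ≤ β * β⁻¹ ^ (i + 1) := by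
        rw [hexp, zpow_neg, zpow_natCast, ← inv_pow]
        exact mul_le_mul_of_nonneg_right (ha _) (by positivity)
    _ = β⁻¹ ^ i := by rw [pow_succ, mul_left_comm, mul_inv_cancel₀ hβ.ne', mul_one]

theorem pow_succ_sub_le_sum_mul_pow (hβ : 1 < β) (ha : ∀ i, a i ≤ β)
    (hsum : HasSum (fun i => a i * β ^ (-(i : ℤ) - 1)) 1) (k : ℕ) :
    β ^ (k + 1) - (1 - β⁻¹)⁻¹ ≤ ∑ i ∈ range (k + 1), a i * β ^ (k - i) := by
  have hβ0 : 0 < β := zero_lt_one.trans hβ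
  have hfull := hasSum_mul_zpow_sub_of_hasSum_one hβ0.ne' hsum k
  have hsplit := hfull.summable.sum_add_tsum_nat_add (k + 1)
  rw [hfull.tsum_eq] at hsplit
  have htail : ∑' i, a (i + (k + 1)) * β ^ ((k : ℤ) - ↑(i + (k + 1))) ≤ (1 - β⁻¹)⁻¹ := by
    rw [← tsum_geometric_of_lt_one (by positivity) (inv_lt_one_of_one_lt₀ hβ)]
    exact Summable.tsum_le_tsum (mul_zpow_tail_le_inv_pow hβ0 ha k)
      (hfull.summable.comp_injective (add_left_injective (k + 1)))
      (summable_geometric_of_lt_one (by positivity) (inv_lt_one_of_one_lt₀ hβ))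
  have hhead : ∑ i ∈ range (k + 1), a i * β ^ ((k : ℤ) - i)
      = ∑ i ∈ range (k + 1), a i * β ^ (k - i) := by
    refine sum_congr rfl fun i hi => ?_
    rw [← Nat.cast_sub (Nat.lt_succ_iff.mp (mem_range.mp hi)), zpow_natCast]
  linarith

end BetaExpansion

theorem canonical_numeration_lower_bound_general (β : ℝ) (hβ1 : 1 < β)
    (t : ℕ → ℕ) (ht : ∀ i, (t i : ℝ) ≤ β)
    (hsum : HasSum (fun i => (t i : ℝ) * β ^ (-(i : ℤ) - 1)) 1)
    (U : ℕ → ℝ) (hU0 : U 0 = 1)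
    (hU : ∀ k, U (k + 1) = (∑ i ∈ Finset.range (k + 1), (t i : ℝ) * U (k - i)) + 1) :
    ∃ B > 0, ∀ N, B * β ^ N ≤ U N := by
  have hB : 0 < 1 - β⁻¹ := sub_pos.2 (inv_lt_one_of_one_lt₀ hβ1)
  refine ⟨1 - β⁻¹, hB, fun N => ?_⟩
  induction N using Nat.strong_induction_on with
  | _ N ih =>
    cases N with
    | zero => simp [hU0, (inv_pos.2 (zero_lt_one.trans hβ1)).le]
    | succ k =>
      have hrec : (1 - β⁻¹) * ∑ i ∈ range (k + 1), (t i : ℝ) * β ^ (k - i)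
          ≤ ∑ i ∈ range (k + 1), (t i : ℝ) * U (k - i) := by
        rw [mul_sum]
        refine sum_le_sum fun i _ => ?_
        rw [mul_left_comm]
        exact mul_le_mul_of_nonneg_left (ih _ (by omega)) (Nat.cast_nonneg _)
      have hdigits := pow_succ_sub_le_sum_mul_pow hβ1 ht hsum k
      calc (1 - β⁻¹) * β ^ (k + 1)
          = (1 - β⁻¹) * (β ^ (k + 1) - (1 - β⁻¹)⁻¹) + 1 := by
            rw [mul_sub, mul_inv_cancel₀ hB.ne']; ring
        _ ≤ U (k + 1) := by
            rw [hU k]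
            linarith [mul_le_mul_of_nonneg_left hdigits hB.le]

/-- Let `β` be a Pisot number and `(t_i) = d*_β(1)` the quasi-greedy expansion of `1`, so that
`1 = Σ_{i≥1} t_i β^{-i}` with digits `t_i ≤ β`. Let `(U_N)` be the associated canonical linear
numeration system: `U₀ = 1`, `U_k = t₁U_{k-1} + … + t_kU₀ + 1`. Then there is a constant
`B > 0` with `U_N ≥ B β^N` for all `N`. -/
theorem canonical_numeration_lower_bound (β : ℝ) (hβ1 : 1 < β) (hint : IsIntegral ℤ β)
    (hconj : ∀ z : ℂ, Polynomial.aeval z (minpoly ℚ β) = 0 → z ≠ (β : ℂ) →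
      ‖z‖ < 1)
    (t : ℕ → ℕ) (ht : ∀ i, (t i : ℝ) ≤ β)
    (hsum : HasSum (fun i => (t i : ℝ) * β ^ (-(i : ℤ) - 1)) 1)
    (U : ℕ → ℝ) (hU0 : U 0 = 1)
    (hU : ∀ k, U (k + 1) = (∑ i ∈ Finset.range (k + 1), (t i : ℝ) * U (k - i)) + 1) :
    ∃ B > 0, ∀ N, B * β ^ N ≤ U N :=
  canonical_numeration_lower_bound_general β hβ1 t ht hsum U hU0 hU
end
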